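/- Let a, b, c ∈ ℝ³ be fixed, let k = (c − b)/‖c − b‖ with b ≠ c, and let d ∈ ℝ³. Let d' = c + R_θ(d − c), where R_θ is the Rodrigues rotation by angle θ about axis k. If the dihedral angle τ(a,b,c,d) is defined (normals nonzero), then cos τ(a,b,c,d') = cos(τ(a,b,c,d) + θ) and sin τ(a,b,c,d') = sin(τ(a,b,c,d) + θ). -/

import Mathlib

open scoped RealInnerProductSpace

noncomputable def cross3 (u v : EuclideanSpace ℝ (Fin 3)) : EuclideanSpace ℝ (Fin 3) :=
  WithLp.toLp 2 ![u 1 * v 2 - u 2 * v 1, u 2 * v 0 - u 0 * v 2, u 0 * v 1 - u 1 * v 0]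

/-- First normal vector of the dihedral angle: `n₁ = (b − a) × (c − b)`. -/
noncomputable def dihN1 (a b c : EuclideanSpace ℝ (Fin 3)) : EuclideanSpace ℝ (Fin 3) :=
  cross3 (b - a) (c - b)

/-- Second normal vector of the dihedral angle: `n₂ = (c − b) × (d − c)`. -/
noncomputable def dihN2 (b c d : EuclideanSpace ℝ (Fin 3)) : EuclideanSpace ℝ (Fin 3) :=
  cross3 (c - b) (d - c)

/-- Cosine of the dihedral angle `τ(a,b,c,d)`. -/
noncomputable def cosDih (a b c d : EuclideanSpace ℝ (Fin 3)) : ℝ :=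
  ⟪dihN1 a b c, dihN2 b c d⟫ / (‖dihN1 a b c‖ * ‖dihN2 b c d‖)

/-- Sine of the dihedral angle `τ(a,b,c,d)`. -/
noncomputable def sinDih (a b c d : EuclideanSpace ℝ (Fin 3)) : ℝ :=
  ⟪c - b, cross3 (dihN1 a b c) (dihN2 b c d)⟫ /
    (‖c - b‖ * ‖dihN1 a b c‖ * ‖dihN2 b c d‖)

/-- The Rodrigues rotation of `v` by angle `θ` about the axis `k`. -/
noncomputable def rodrigues (k : EuclideanSpace ℝ (Fin 3)) (θ : ℝ)
    (v : EuclideanSpace ℝ (Fin 3)) : EuclideanSpace ℝ (Fin 3) :=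
  Real.cos θ • v + Real.sin θ • cross3 k v + ((1 - Real.cos θ) * ⟪k, v⟫) • k

/-! Since `u × ·` commutes with rotations about `u`, moving `d` rotates the normal `n₂` by `θ`
about the unit axis `k`, preserving its length, while `n₁ ⊥ k`. The numerators `⟪n₁, n₂⟫` and
`⟪k, n₁ × n₂⟫ = ⟪k × n₁, n₂⟫` of `cos τ` and `sin τ` are the coordinates of `n₂` in the frame
`(n₁, k × n₁)` of the plane `k⊥`, whose vectors are orthogonal of equal length, so this rotation
adds `θ` to `τ`. -/

open Matrix WithLp

lemma cross3_eq_crossProduct (u v : EuclideanSpace ℝ (Fin 3)) :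
    cross3 u v = toLp 2 (ofLp u ⨯₃ ofLp v) := by
  rw [cross_apply]; rfl

lemma real_inner_eq_dotProduct {ι : Type*} [Fintype ι] (x y : EuclideanSpace ℝ ι) :
    ⟪x, y⟫ = ofLp x ⬝ᵥ ofLp y := by
  rw [EuclideanSpace.inner_eq_star_dotProduct, star_trivial, dotProduct_comm]

section cross3

variable (u v w x : EuclideanSpace ℝ (Fin 3))

lemma cross3_add_right : cross3 u (v + w) = cross3 u v + cross3 u w := by
  simp only [cross3_eq_crossProduct, ofLp_add, map_add, toLp_add]

lemma cross3_smul_right (r : ℝ) : cross3 u (r • v) = r • cross3 u v := by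
  simp only [cross3_eq_crossProduct, ofLp_smul, map_smul, toLp_smul]

lemma cross3_smul_left (r : ℝ) : cross3 (r • u) v = r • cross3 u v := by
  simp only [cross3_eq_crossProduct, ofLp_smul, map_smul, LinearMap.smul_apply, toLp_smul]

lemma cross3_self : cross3 u u = 0 := by
  simp only [cross3_eq_crossProduct, cross_self, toLp_zero]

lemma neg_cross3 : -cross3 u v = cross3 v u := by
  simp only [cross3_eq_crossProduct, ← toLp_neg, cross_anticomm]

lemma inner_self_cross3 : ⟪u, cross3 u v⟫ = 0 := by
  rw [real_inner_eq_dotProduct, cross3_eq_crossProduct, ofLp_toLp, dot_self_cross]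

lemma inner_cross3_self : ⟪v, cross3 u v⟫ = 0 := by
  rw [real_inner_eq_dotProduct, cross3_eq_crossProduct, ofLp_toLp, dot_cross_self]

lemma inner_cross3_permutation : ⟪u, cross3 v w⟫ = ⟪v, cross3 w u⟫ := by
  simp only [real_inner_eq_dotProduct, cross3_eq_crossProduct]
  exact triple_product_permutation _ _ _

lemma cross3_cross3 : cross3 u (cross3 v w) = ⟪u, w⟫ • v - ⟪v, u⟫ • w := by
  simp only [real_inner_eq_dotProduct, cross3_eq_crossProduct, cross_cross_eq_smul_sub_smul',
    toLp_sub, toLp_smul, toLp_ofLp]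

lemma inner_cross3_cross3 :
    ⟪cross3 u v, cross3 w x⟫ = ⟪u, w⟫ * ⟪v, x⟫ - ⟪u, x⟫ * ⟪v, w⟫ := by
  simp only [real_inner_eq_dotProduct, cross3_eq_crossProduct, cross_dot_cross]

end cross3

section rodrigues

variable (k : EuclideanSpace ℝ (Fin 3)) (θ : ℝ)

lemma cross3_rodrigues_smul_self (u v : EuclideanSpace ℝ (Fin 3)) (r : ℝ) :
    cross3 u (rodrigues (r • u) θ v) = rodrigues (r • u) θ (cross3 u v) := by
  simp only [rodrigues, cross3_add_right, cross3_smul_right, cross3_smul_left, cross3_self,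
    cross3_cross3, real_inner_smul_left, real_inner_smul_right, inner_self_cross3]
  module

lemma norm_rodrigues (hk : ‖k‖ = 1) (v : EuclideanSpace ℝ (Fin 3)) :
    ‖rodrigues k θ v‖ = ‖v‖ := by
  rw [← sq_eq_sq₀ (norm_nonneg _) (norm_nonneg _), ← real_inner_self_eq_norm_sq,
    ← real_inner_self_eq_norm_sq]
  have hkk : ⟪k, k⟫ = 1 := by rw [real_inner_self_eq_norm_sq, hk, one_pow]
  simp only [rodrigues, inner_add_left, inner_add_right, real_inner_smul_left,
    real_inner_smul_right, inner_self_cross3, inner_cross3_self, inner_cross3_cross3, hkk,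
    real_inner_comm v (cross3 k v), real_inner_comm k (cross3 k v), real_inner_comm k v]
  linear_combination (⟪v, v⟫ - ⟪k, v⟫ ^ 2) * Real.cos_sq_add_sin_sq θ

lemma inner_rodrigues_right {n : EuclideanSpace ℝ (Fin 3)} (hn : ⟪k, n⟫ = 0)
    (m : EuclideanSpace ℝ (Fin 3)) :
    ⟪n, rodrigues k θ m⟫ = Real.cos θ * ⟪n, m⟫ - Real.sin θ * ⟪k, cross3 n m⟫ := by
  rw [rodrigues, inner_add_right, inner_add_right, real_inner_smul_right, real_inner_smul_right,
    real_inner_smul_right, inner_cross3_permutation, ← neg_cross3, inner_neg_right,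
    real_inner_comm k n, hn]
  ring

lemma inner_cross3_rodrigues_right (hk : ‖k‖ = 1) {n : EuclideanSpace ℝ (Fin 3)}
    (hn : ⟪k, n⟫ = 0) (m : EuclideanSpace ℝ (Fin 3)) :
    ⟪k, cross3 n (rodrigues k θ m)⟫ = Real.cos θ * ⟪k, cross3 n m⟫ + Real.sin θ * ⟪n, m⟫ := by
  have hkk : ⟪k, k⟫ = 1 := by rw [real_inner_self_eq_norm_sq, hk, one_pow]
  rw [rodrigues, cross3_add_right, cross3_add_right, cross3_smul_right, cross3_smul_right,
    cross3_smul_right, cross3_cross3, inner_add_right, inner_add_right, real_inner_smul_right,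
    real_inner_smul_right, real_inner_smul_right, inner_sub_right, real_inner_smul_right,
    real_inner_smul_right, inner_cross3_self, hkk, real_inner_comm, hn]
  ring

end rodrigues

lemma inner_sub_dihN1 (a b c : EuclideanSpace ℝ (Fin 3)) : ⟪c - b, dihN1 a b c⟫ = 0 :=
  inner_cross3_self _ _

lemma dihN2_add_rodrigues_sub (b c d : EuclideanSpace ℝ (Fin 3)) (r θ : ℝ) :
    dihN2 b c (c + rodrigues (r • (c - b)) θ (d - c)) =
      rodrigues (r • (c - b)) θ (dihN2 b c d) := by
  rw [dihN2, dihN2, add_sub_cancel_left, cross3_rodrigues_smul_self]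

lemma sinDih_eq_inner_smul (a b c d : EuclideanSpace ℝ (Fin 3)) :
    sinDih a b c d = ⟪‖c - b‖⁻¹ • (c - b), cross3 (dihN1 a b c) (dihN2 b c d)⟫ /
      (‖dihN1 a b c‖ * ‖dihN2 b c d‖) := by
  rw [sinDih, real_inner_smul_left]
  ring

theorem dihedral_rotation_update_general (a b c d : EuclideanSpace ℝ (Fin 3))
    (hbc : b ≠ c) (θ τ : ℝ)
    (hcos : Real.cos τ = cosDih a b c d) (hsin : Real.sin τ = sinDih a b c d) :
    cosDih a b c (c + rodrigues (‖c - b‖⁻¹ • (c - b)) θ (d - c)) = Real.cos (τ + θ) ∧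
    sinDih a b c (c + rodrigues (‖c - b‖⁻¹ • (c - b)) θ (d - c)) = Real.sin (τ + θ) := by
  set k := ‖c - b‖⁻¹ • (c - b)
  have hk : ‖k‖ = 1 := norm_smul_inv_norm (sub_ne_zero.mpr hbc.symm)
  have hn₁ : ⟪k, dihN1 a b c⟫ = 0 := by
    rw [real_inner_smul_left, inner_sub_dihN1, mul_zero]
  rw [sinDih_eq_inner_smul] at hsin
  rw [cosDih, sinDih_eq_inner_smul, dihN2_add_rodrigues_sub, norm_rodrigues _ _ hk,
    inner_rodrigues_right _ _ hn₁, inner_cross3_rodrigues_right _ _ hk hn₁, Real.cos_add,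
    Real.sin_add, hcos, hsin, cosDih]
  constructor <;> ring

/-- Rotating `d` about the bond axis `k = (c − b)/‖c − b‖` by an angle `θ`
(around the point `c`) increments the dihedral angle `τ(a,b,c,d)` by `θ`. -/
theorem dihedral_rotation_update (a b c d : EuclideanSpace ℝ (Fin 3))
    (hbc : b ≠ c) (h1 : dihN1 a b c ≠ 0) (h2 : dihN2 b c d ≠ 0) (θ τ : ℝ)
    (hcos : Real.cos τ = cosDih a b c d) (hsin : Real.sin τ = sinDih a b c d) :
    cosDih a b c (c + rodrigues (‖c - b‖⁻¹ • (c - b)) θ (d - c)) = Real.cos (τ + θ) ∧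
    sinDih a b c (c + rodrigues (‖c - b‖⁻¹ • (c - b)) θ (d - c)) = Real.sin (τ + θ) :=
  dihedral_rotation_update_general a b c d hbc θ τ hcos hsin
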